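/- arXiv:1603.08190 — 2 statements merged into one kernel-verified Lean document; each statement's English description precedes it below -/
import Mathlib

section
/- For a chronology violating class [r], B_f([r]) = ∂[r] if and only if B_p([r]) = ∅; analogously, B_p([r]) = ∂[r] if and only if B_f([r]) = ∅. -/
/-!
Let `C = [r]`. It is open, and by transitivity it is reflexive and contains every point lying
chronologically between two of its points. Hence `C ⊆ I⁻(C)`, so `B_f(C) ⊆ ∂C` always, and
`B_f(C) = ∂C` says exactly that no point of `∂C` lies in `I⁻(C)`.

If `B_p(C) = ∅`, a point of `∂C ∩ I⁻(C)` would lie between two points of `C`, hence in `C`.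
Conversely, if `∂C` misses `I⁻(C)`, take `p ∈ closure C` and `q ≪ p`; as `I⁺(q)` is open,
`q ≪ x` for some `x ∈ C`. Every point of a connected chronological segment from `q` to `x` lies
in `I⁻(x) ∪ {x}` or is `q`, so the segment cannot meet `∂C` and stays inside `C`; thus `q ∈ C`
and `p ∈ I⁺(C)`. The second equivalence is the first one for the reversed relation.
-/

open Set Topology

section Chronology

variable {M : Type*} [TopologicalSpace M]

/-- `I⁻(C)`; the chronological future `I⁺(C)` is `relPast (flip R) C`. -/
def relPast (R : M → M → Prop) (C : Set M) : Set M := {y | ∃ z ∈ C, R y z}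

def HasConnectedSegments (R : M → M → Prop) : Prop :=
  ∀ q x, R q x → ∃ S : Set M, IsPreconnected S ∧ q ∈ S ∧ x ∈ S ∧
    S ⊆ {q, x} ∪ {y | R q y ∧ R y x}

theorem hasConnectedSegments_of_paths {R : M → M → Prop}
    (hpath : ∀ q p : M, R q p → ∃ γ : ℝ → M, ContinuousOn γ (Icc 0 1) ∧
      γ 0 = q ∧ γ 1 = p ∧ ∀ t ∈ Ioo (0:ℝ) 1, R q (γ t) ∧ R (γ t) p) :
    HasConnectedSegments R := by
  intro q x hqx
  obtain ⟨γ, hγ, hγ0, hγ1, hγmid⟩ := hpath q x hqx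
  refine ⟨γ '' Icc 0 1, isPreconnected_Icc.image γ hγ, ⟨0, by simp, hγ0⟩, ⟨1, by simp, hγ1⟩, ?_⟩
  rintro _ ⟨t, ht, rfl⟩
  rcases ht.1.eq_or_lt with rfl | h0
  · simp [hγ0]
  rcases ht.2.eq_or_lt with rfl | h1
  · simp [hγ1]
  exact Or.inr (hγmid t ⟨h0, h1⟩)

theorem HasConnectedSegments.flip {R : M → M → Prop} (h : HasConnectedSegments R) :
    HasConnectedSegments (flip R) := by
  intro q x hqx
  obtain ⟨S, hS, hxS, hqS, hsub⟩ := h x q hqx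
  refine ⟨S, hS, hqS, hxS, fun y hy => ?_⟩
  rcases hsub hy with hy | ⟨hxy, hyq⟩
  · exact Or.inl (pair_comm x q ▸ hy)
  · exact Or.inr ⟨hyq, hxy⟩

section Boundaries

variable {R : M → M → Prop} {C : Set M}

theorem closure_diff_relPast_eq_frontier_iff (hC : IsOpen C) (hrefl : ∀ x ∈ C, R x x) :
    closure C \ relPast R C = frontier C ↔ Disjoint (frontier C) (relPast R C) := by
  rw [hC.frontier_eq]
  refine ⟨fun h => h ▸ disjoint_sdiff_left, fun hdisj => ?_⟩
  have hsub : C ⊆ relPast R C := fun x hx => ⟨x, hx, hrefl x hx⟩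
  exact (sdiff_subset_sdiff_right hsub).antisymm fun x hx => ⟨hx.1, disjoint_left.mp hdisj hx⟩

theorem disjoint_frontier_relPast_of_closure_subset (hC : IsOpen C)
    (hconvex : ∀ ⦃z x w⦄, z ∈ C → w ∈ C → R z x → R x w → x ∈ C)
    (hclosure : closure C ⊆ relPast (flip R) C) : Disjoint (frontier C) (relPast R C) := by
  rw [disjoint_left]
  rintro x hx ⟨w, hw, hxw⟩
  obtain ⟨z, hz, hzx⟩ := hclosure (frontier_subset_closure hx)
  exact disjoint_left.mp (disjoint_frontier_iff_isOpen.mpr hC) hx (hconvex hz hw hzx hxw)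

theorem closure_subset_relPast_flip_of_disjoint (hC : IsOpen C)
    (hfut : ∀ q, IsOpen {y | R q y}) (hpast_ne : ∀ p, ∃ q, R q p) (hseg : HasConnectedSegments R)
    (hdisj : Disjoint (frontier C) (relPast R C)) : closure C ⊆ relPast (flip R) C := by
  intro p hp
  obtain ⟨q, hqp⟩ := hpast_ne p
  obtain ⟨x, hqx, hx⟩ := mem_closure_iff.mp hp _ (hfut q) hqp
  obtain ⟨S, hS, hqS, hxS, hSsub⟩ := hseg q x hqx
  have hSC : S ⊆ C := by
    refine hS.subset_of_closure_inter_subset hC ⟨x, hxS, hx⟩ fun y ⟨hyC, hyS⟩ => ?_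
    by_contra hy
    have hyx : R y x := by
      rcases hSsub hyS with (rfl | rfl) | ⟨-, hyx⟩
      exacts [hqx, absurd hx hy, hyx]
    exact disjoint_left.mp hdisj (hC.frontier_eq ▸ ⟨hyC, hy⟩) ⟨x, hx, hyx⟩
  exact ⟨q, hSC hqS, hqp⟩

theorem closure_diff_relPast_eq_frontier_iff_closure_diff_relPast_flip_eq_empty (hC : IsOpen C)
    (hconvex : ∀ ⦃z x w⦄, z ∈ C → w ∈ C → R z x → R x w → x ∈ C)
    (hrefl : ∀ x ∈ C, R x x) (hfut : ∀ q, IsOpen {y | R q y}) (hpast_ne : ∀ p, ∃ q, R q p)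
    (hseg : HasConnectedSegments R) :
    closure C \ relPast R C = frontier C ↔ closure C \ relPast (flip R) C = ∅ := by
  rw [closure_diff_relPast_eq_frontier_iff hC hrefl, sdiff_eq_empty]
  exact ⟨closure_subset_relPast_flip_of_disjoint hC hfut hpast_ne hseg,
    disjoint_frontier_relPast_of_closure_subset hC hconvex⟩

end Boundaries

end Chronology

theorem Bf_eq_frontier_iff_Bp_empty_general
    {M : Type*} [TopologicalSpace M] (ll : M → M → Prop)
    (htrans : ∀ x y z, ll x y → ll y z → ll x z)
    (hopen : IsOpen {p : M × M | ll p.1 p.2})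
    (hpast_ne : ∀ p : M, ∃ q, ll q p)
    (hfut_ne : ∀ p : M, ∃ q, ll p q)
    (hpath : ∀ q p : M, ll q p → ∃ γ : ℝ → M, ContinuousOn γ (Set.Icc 0 1) ∧
      γ 0 = q ∧ γ 1 = p ∧ ∀ t ∈ Set.Ioo (0:ℝ) 1, ll q (γ t) ∧ ll (γ t) p)
    (r : M) :
    let cls : Set M := {y | ll r y} ∩ {y | ll y r}
    let Bf : Set M := closure cls \ {y | ∃ z ∈ cls, ll y z}
    let Bp : Set M := closure cls \ {y | ∃ z ∈ cls, ll z y}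
    (Bf = frontier cls ↔ Bp = ∅) ∧ (Bp = frontier cls ↔ Bf = ∅) := by
  intro cls Bf Bp
  have hfut : ∀ q, IsOpen {y | ll q y} := fun q => hopen.preimage (Continuous.prodMk_right q)
  have hpast : ∀ q, IsOpen {y | ll y q} := fun q => hopen.preimage (Continuous.prodMk_left q)
  have hC : IsOpen cls := (hfut r).inter (hpast r)
  have hrefl : ∀ x ∈ cls, ll x x := fun x hx => htrans x r x hx.2 hx.1
  have hconvex : ∀ ⦃z x w⦄, z ∈ cls → w ∈ cls → ll z x → ll x w → x ∈ cls :=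
    fun z x w hz hw hzx hxw => ⟨htrans r z x hz.1 hzx, htrans x w r hxw hw.2⟩
  have hseg := hasConnectedSegments_of_paths hpath
  exact ⟨closure_diff_relPast_eq_frontier_iff_closure_diff_relPast_flip_eq_empty hC hconvex hrefl
      hfut hpast_ne hseg,
    closure_diff_relPast_eq_frontier_iff_closure_diff_relPast_flip_eq_empty (R := flip ll) hC
      (fun _ _ _ hz hw hzx hxw => hconvex hw hz hxw hzx) hrefl hpast hfut_ne hseg.flip⟩

/-- `B_f([r]) = ∂[r]` iff `B_p([r]) = ∅`, and `B_p([r]) = ∂[r]` iff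
`B_f([r]) = ∅`. -/
theorem Bf_eq_frontier_iff_Bp_empty
    {M : Type*} [TopologicalSpace M] (ll : M → M → Prop)
    (htrans : ∀ x y z, ll x y → ll y z → ll x z)
    (hopen : IsOpen {p : M × M | ll p.1 p.2})
    (hpast_ne : ∀ p : M, ∃ q, ll q p)
    (hfut_ne : ∀ p : M, ∃ q, ll p q)
    (hpath : ∀ q p : M, ll q p → ∃ γ : ℝ → M, ContinuousOn γ (Set.Icc 0 1) ∧
      γ 0 = q ∧ γ 1 = p ∧ ∀ t ∈ Set.Ioo (0:ℝ) 1, ll q (γ t) ∧ ll (γ t) p)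
    (r : M) (hr : ll r r) :
    let cls : Set M := {y | ll r y} ∩ {y | ll y r}
    let Bf : Set M := closure cls \ {y | ∃ z ∈ cls, ll y z}
    let Bp : Set M := closure cls \ {y | ∃ z ∈ cls, ll z y}
    (Bf = frontier cls ↔ Bp = ∅) ∧ (Bp = frontier cls ↔ Bf = ∅) :=
  Bf_eq_frontier_iff_Bp_empty_general ll htrans hopen hpast_ne hfut_ne hpath r
end

section
/- Let F be a future set (I⁺(F) ⊆ F). Then the closure of F is a future set, M \ F is a past set, and the boundary ∂F is achronal. -/
/-!
Openness of `≪` gives `I⁺(closure S) ⊆ I⁺(S)`, and `I⁺(F)` is open, so for a future set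
`I⁺(closure F) ⊆ I⁺(F) ⊆ interior F`; this closes up `closure F` and keeps the future of a
boundary point off the boundary.
-/

section Chronology

variable {M : Type*} {ll : M → M → Prop}

def chronoFuture (ll : M → M → Prop) (S : Set M) : Set M := {y | ∃ s ∈ S, ll s y}

def chronoPast (ll : M → M → Prop) (S : Set M) : Set M := {y | ∃ s ∈ S, ll y s}

theorem chronoPast_compl_subset_compl_of_future {F : Set M} (hF : chronoFuture ll F ⊆ F) :
    chronoPast ll Fᶜ ⊆ Fᶜ := by
  rintro y ⟨s, hs, hys⟩ hyF
  exact hs (hF ⟨y, hyF, hys⟩)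

variable [TopologicalSpace M]

theorem isOpen_setOf_rel_left (hopen : IsOpen {p : M × M | ll p.1 p.2}) (s : M) :
    IsOpen {y | ll s y} :=
  hopen.preimage (Continuous.prodMk_right s)

theorem isOpen_setOf_rel_right (hopen : IsOpen {p : M × M | ll p.1 p.2}) (y : M) :
    IsOpen {x | ll x y} :=
  hopen.preimage (continuous_id.prodMk continuous_const)

theorem isOpen_chronoFuture (hopen : IsOpen {p : M × M | ll p.1 p.2}) (S : Set M) :
    IsOpen (chronoFuture ll S) := by
  have hunion : chronoFuture ll S = ⋃ s ∈ S, {y | ll s y} := by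
    ext y
    simp [chronoFuture]
  rw [hunion]
  exact isOpen_biUnion fun s _ => isOpen_setOf_rel_left hopen s

theorem chronoFuture_closure_subset (hopen : IsOpen {p : M × M | ll p.1 p.2}) (S : Set M) :
    chronoFuture ll (closure S) ⊆ chronoFuture ll S := by
  rintro y ⟨s, hs, hsy⟩
  obtain ⟨s', hs'y, hs'S⟩ := mem_closure_iff.mp hs _ (isOpen_setOf_rel_right hopen y) hsy
  exact ⟨s', hs'S, hs'y⟩

theorem chronoFuture_closure_subset_closure_of_future
    (hopen : IsOpen {p : M × M | ll p.1 p.2}) {F : Set M} (hF : chronoFuture ll F ⊆ F) :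
    chronoFuture ll (closure F) ⊆ closure F :=
  (chronoFuture_closure_subset hopen F).trans (hF.trans subset_closure)

theorem not_rel_of_mem_frontier_of_future (hopen : IsOpen {p : M × M | ll p.1 p.2})
    {F : Set M} (hF : chronoFuture ll F ⊆ F) {x y : M} (hx : x ∈ frontier F)
    (hy : y ∈ frontier F) : ¬ ll x y := by
  intro hxy
  have hyF : y ∈ chronoFuture ll F := chronoFuture_closure_subset hopen F ⟨x, hx.1, hxy⟩
  exact hy.2 (interior_maximal hF (isOpen_chronoFuture hopen F) hyF)

end Chronology

theorem future_set_properties_general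
    {M : Type*} [TopologicalSpace M] (ll : M → M → Prop)
    (hopen : IsOpen {p : M × M | ll p.1 p.2})
    (F : Set M) (hF : {y | ∃ s ∈ F, ll s y} ⊆ F) :
    ({y | ∃ s ∈ closure F, ll s y} ⊆ closure F) ∧
    ({y | ∃ s ∈ Fᶜ, ll y s} ⊆ Fᶜ) ∧
    (∀ x ∈ frontier F, ∀ y ∈ frontier F, ¬ ll x y) :=
  ⟨chronoFuture_closure_subset_closure_of_future hopen hF,
    chronoPast_compl_subset_compl_of_future hF,
    fun _ hx _ hy => not_rel_of_mem_frontier_of_future hopen hF hx hy⟩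

/-- If `F` is a future set (`I⁺(F) ⊆ F`) then `closure F` is a future set,
`M \ F` is a past set, and the boundary `∂F` is achronal. -/
theorem future_set_properties
    {M : Type*} [TopologicalSpace M] (ll : M → M → Prop)
    (htrans : ∀ x y z, ll x y → ll y z → ll x z)
    (hopen : IsOpen {p : M × M | ll p.1 p.2})
    (F : Set M) (hF : {y | ∃ s ∈ F, ll s y} ⊆ F) :
    ({y | ∃ s ∈ closure F, ll s y} ⊆ closure F) ∧
    ({y | ∃ s ∈ Fᶜ, ll y s} ⊆ Fᶜ) ∧
    (∀ x ∈ frontier F, ∀ y ∈ frontier F, ¬ ll x y) :=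
  future_set_properties_general ll hopen F hF
end
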